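/- Let H be a real Hilbert space and a, b ∈ H. For q ≥ 0 and an interval I = (t₀,t₁) of length τ, define the H-valued polynomial w(t) = ((-1)^q/2)(L_q(t) − L_{q+1}(t))·(a − b), where L_q, L_{q+1} are affinely mapped Legendre polynomials on I. Then ∫_I ‖w(t)‖_H² dt = (τ(q+1)/((2q+1)(2q+3))) ‖a − b‖_H². -/

import Mathlib

open Polynomial

/-- The `q`-th Legendre polynomial, via the Rodrigues formula, normalized so that
`L_q(1) = 1`. -/
noncomputable def legendreP (q : ℕ) : Polynomial ℝ :=
  Polynomial.C (1 / (2 ^ q * (Nat.factorial q : ℝ))) *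
    (⇑(Polynomial.derivative (R := ℝ)))^[q] ((Polynomial.X ^ 2 - 1) ^ q)

/-- The `q`-th Legendre polynomial mapped affinely from `(-1,1)` to `(t₀,t₁)`. -/
noncomputable def legendreMapped (q : ℕ) (t₀ t₁ : ℝ) : ℝ → ℝ :=
  fun t => (legendreP q).eval ((2 * t - t₀ - t₁) / (t₁ - t₀))

/-
Substituting `x = (2t - t₀ - t₁)/τ` turns the integral into
`τ/8 · ‖a - b‖² · ∫₋₁¹ (P_q - P_{q+1})²`. By Rodrigues' formula and `n`-fold integration by parts
(the boundary terms vanish because `(x² - 1)ⁿ` has roots of order `n` at `±1`), `P_n` is orthogonal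
to all polynomials of degree `< n`, so the cross term drops, and
`∫₋₁¹ P_n² = (2n)!/(2ⁿ n!)² · ∫₋₁¹ (1 - x²)ⁿ = 2/(2n+1)`.
-/

open Nat intervalIntegral

namespace Polynomial

theorem isRoot_iterate_derivative_of_pow_dvd {R : Type*} [CommRing R] {p : R[X]} {c : R}
    {n j : ℕ} (h : (X - C c) ^ n ∣ p) (hj : j < n) : (derivative^[j] p).IsRoot c :=
  dvd_iff_isRoot.mp <| (dvd_pow_self _ (Nat.sub_ne_zero_of_lt hj)).trans
    (pow_sub_dvd_iterate_derivative_of_pow_dvd j h)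

theorem iterate_derivative_natDegree {R : Type*} [CommSemiring R] (p : R[X]) :
    derivative^[p.natDegree] p = C (p.natDegree ! * p.leadingCoeff) := by
  rw [eq_C_of_natDegree_eq_zero (Nat.eq_zero_of_le_zero
    ((natDegree_iterate_derivative p _).trans_eq (Nat.sub_self _))), coeff_iterate_derivative,
    zero_add, Nat.descFactorial_self, nsmul_eq_mul, leadingCoeff]

theorem integral_derivative_mul_eq_neg {u : ℝ[X]} {a b : ℝ} (v : ℝ[X]) (ha : u.IsRoot a)
    (hb : u.IsRoot b) :
    ∫ x in a..b, (derivative u).eval x * v.eval x =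
      -∫ x in a..b, u.eval x * (derivative v).eval x := by
  rw [integral_mul_deriv_eq_deriv_mul (fun x _ ↦ u.hasDerivAt x) (fun x _ ↦ v.hasDerivAt x)
    ((derivative u).continuous.intervalIntegrable _ _)
    ((derivative v).continuous.intervalIntegrable _ _),
    ha.eq_zero, hb.eq_zero]
  ring

theorem integral_iterate_derivative_mul {p : ℝ[X]} {a b : ℝ} {n : ℕ}
    (h : ∀ j < n, (derivative^[j] p).IsRoot a ∧ (derivative^[j] p).IsRoot b) (v : ℝ[X]) :
    ∫ x in a..b, (derivative^[n] p).eval x * v.eval x =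
      (-1) ^ n * ∫ x in a..b, p.eval x * (derivative^[n] v).eval x := by
  induction n generalizing v with
  | zero => simp
  | succ n ih =>
    obtain ⟨ha, hb⟩ := h n n.lt_succ_self
    rw [Function.iterate_succ_apply', integral_derivative_mul_eq_neg v ha hb,
      ih (fun j hj ↦ h j (hj.trans n.lt_succ_self)), Function.iterate_succ_apply, pow_succ]
    ring

end Polynomial

theorem natDegree_X_sq_sub_one_pow (n : ℕ) : ((X ^ 2 - 1 : ℝ[X]) ^ n).natDegree = 2 * n := by
  rw [natDegree_pow, ← map_one C, natDegree_X_pow_sub_C, mul_comm]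

theorem iterate_derivative_X_sq_sub_one_pow_two_mul (n : ℕ) :
    derivative^[2 * n] ((X ^ 2 - 1 : ℝ[X]) ^ n) = C ((2 * n)! : ℝ) := by
  have hmonic : ((X ^ 2 - 1 : ℝ[X]) ^ n).Monic := by
    simpa using (monic_X_pow_sub_C (1 : ℝ) two_ne_zero).pow n
  rw [← natDegree_X_sq_sub_one_pow, iterate_derivative_natDegree, hmonic.leadingCoeff, mul_one]

theorem isRoot_iterate_derivative_X_sq_sub_one_pow {n j : ℕ} (hj : j < n) {c : ℝ}
    (hc : c ^ 2 = 1) : (derivative^[j] ((X ^ 2 - 1 : ℝ[X]) ^ n)).IsRoot c := by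
  have hfactor : (X ^ 2 - 1 : ℝ[X]) = (X - C c) * (X + C c) := by
    rw [← map_one C, ← hc, map_pow]; ring
  exact isRoot_iterate_derivative_of_pow_dvd (pow_dvd_pow_of_dvd (Dvd.intro _ hfactor.symm) n) hj

theorem integral_iterate_derivative_X_sq_sub_one_pow_mul (n : ℕ) (v : ℝ[X]) :
    ∫ x in (-1 : ℝ)..1, (derivative^[n] ((X ^ 2 - 1 : ℝ[X]) ^ n)).eval x * v.eval x =
      ∫ x in (-1 : ℝ)..1, (1 - x ^ 2) ^ n * (derivative^[n] v).eval x := by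
  rw [integral_iterate_derivative_mul (fun j hj ↦
    ⟨isRoot_iterate_derivative_X_sq_sub_one_pow hj (by norm_num),
      isRoot_iterate_derivative_X_sq_sub_one_pow hj (by norm_num)⟩), ← integral_const_mul]
  congr with x
  simp only [eval_pow, eval_sub, eval_X, eval_one]
  rw [← mul_assoc, ← mul_pow, neg_one_mul, neg_sub]

theorem integral_one_sub_sq_pow (n : ℕ) :
    ∫ x in (-1 : ℝ)..1, (1 - x ^ 2) ^ n = 2 ^ (2 * n + 1) * (n ! : ℝ) ^ 2 / (2 * n + 1)! := by
  induction n with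
  | zero => norm_num
  | succ n ih =>
    -- `x (1 - x²)ⁿ⁺¹` vanishes at `±1`; differentiating it gives `(2n+3) Jₙ₊₁ = (2n+2) Jₙ`
    -- for `Jₙ = ∫₋₁¹ (1 - x²)ⁿ`.
    have hderiv : ∀ x ∈ Set.uIcc (-1 : ℝ) 1, HasDerivAt (fun x : ℝ ↦ x * (1 - x ^ 2) ^ (n + 1))
        ((2 * n + 3) * (1 - x ^ 2) ^ (n + 1) - (2 * n + 2) * (1 - x ^ 2) ^ n) x := by
      intro x _
      refine ((hasDerivAt_id' x).fun_mul
        (((hasDerivAt_pow 2 x).const_sub 1).fun_pow (n + 1))).congr_deriv ?_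
      simp only [Nat.add_sub_cancel, Nat.cast_add, Nat.cast_one, Nat.cast_ofNat]
      ring
    have hcont (m : ℕ) : Continuous fun x : ℝ ↦ (1 - x ^ 2) ^ m := by fun_prop
    have hrec := integral_eq_sub_of_hasDerivAt hderiv
      (((hcont _).const_mul _).sub ((hcont _).const_mul _) |>.intervalIntegrable _ _)
    rw [integral_sub (((hcont _).const_mul _).intervalIntegrable _ _)
      (((hcont _).const_mul _).intervalIntegrable _ _), integral_const_mul, integral_const_mul,
      ih] at hrec
    norm_num at hrec
    rw [show 2 * (n + 1) + 1 = 2 * n + 1 + 1 + 1 by ring, factorial_succ (2 * n + 1 + 1),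
      factorial_succ (2 * n + 1), factorial_succ n]
    field_simp at hrec
    rw [eq_div_iff (by positivity)]
    push_cast
    linear_combination (2 * n + 2 : ℝ) * hrec

theorem natDegree_legendreP_le (n : ℕ) : (legendreP n).natDegree ≤ n := by
  refine (natDegree_C_mul_le _ _).trans ((natDegree_iterate_derivative _ n).trans ?_)
  rw [natDegree_X_sq_sub_one_pow]
  omega

theorem integral_legendreP_mul_eq_zero {n : ℕ} {p : ℝ[X]} (hp : p.natDegree < n) :
    ∫ x in (-1 : ℝ)..1, (legendreP n).eval x * p.eval x = 0 := by
  simp only [legendreP, eval_mul, eval_C, mul_assoc, integral_const_mul,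
    integral_iterate_derivative_X_sq_sub_one_pow_mul, iterate_derivative_eq_zero hp]
  simp

theorem integral_legendreP_sq (n : ℕ) :
    ∫ x in (-1 : ℝ)..1, (legendreP n).eval x ^ 2 = 2 / (2 * n + 1) := by
  simp only [legendreP, eval_mul, eval_C, mul_pow, sq ((derivative^[n] _).eval _)]
  rw [integral_const_mul, integral_iterate_derivative_X_sq_sub_one_pow_mul,
    ← Function.iterate_add_apply, ← two_mul, iterate_derivative_X_sq_sub_one_pow_two_mul]
  simp only [eval_C]
  rw [integral_mul_const, integral_one_sub_sq_pow, factorial_succ]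
  push_cast
  field_simp
  ring

theorem integral_legendreP_sub_legendreP_succ_sq (n : ℕ) :
    ∫ x in (-1 : ℝ)..1, ((legendreP n).eval x - (legendreP (n + 1)).eval x) ^ 2 =
      2 / (2 * n + 1) + 2 / (2 * n + 3) := by
  have hint (f : ℝ → ℝ) (hf : Continuous f) : IntervalIntegrable f MeasureTheory.volume (-1) 1 :=
    hf.intervalIntegrable _ _
  simp_rw [sub_sq', mul_assoc]
  rw [integral_sub (hint _ (by fun_prop)) (hint _ (by fun_prop)),
    integral_add (hint _ (by fun_prop)) (hint _ (by fun_prop)), integral_const_mul]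
  simp_rw [mul_comm ((legendreP n).eval _)]
  rw [integral_legendreP_sq, integral_legendreP_sq,
    integral_legendreP_mul_eq_zero ((natDegree_legendreP_le n).trans_lt n.lt_succ_self)]
  push_cast
  ring

theorem integral_comp_affine_neg_one_one {E : Type*} [NormedAddCommGroup E] [NormedSpace ℝ E]
    (f : ℝ → E) (t₀ t₁ : ℝ) :
    ∫ t in t₀..t₁, f ((2 * t - t₀ - t₁) / (t₁ - t₀)) =
      ((t₁ - t₀) / 2) • ∫ x in (-1 : ℝ)..1, f x := by
  rcases eq_or_ne t₀ t₁ with rfl | h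
  · simp
  have hc : (t₁ - t₀) / 2 ≠ 0 := div_ne_zero (sub_ne_zero.mpr h.symm) two_ne_zero
  have hsub (t : ℝ) :
      (2 * t - t₀ - t₁) / (t₁ - t₀) = t / ((t₁ - t₀) / 2) - (t₀ + t₁) / (t₁ - t₀) := by
    field_simp
    ring
  simp_rw [hsub, integral_comp_div_sub f hc]
  congr 2 <;> field_simp <;> ring

theorem jump_estimator_explicit_form_general
    {H : Type*} [NormedAddCommGroup H] [InnerProductSpace ℝ H]
    (a b : H) (q : ℕ) (t₀ t₁ τ : ℝ) (hτ : τ = t₁ - t₀)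
    (w : ℝ → H)
    (hw : w = fun t =>
      (((-1 : ℝ) ^ q / 2) * (legendreMapped q t₀ t₁ t - legendreMapped (q + 1) t₀ t₁ t)) •
        (a - b)) :
    (∫ t in t₀..t₁, ‖w t‖ ^ 2) =
      (τ * ((q : ℝ) + 1) / ((2 * (q : ℝ) + 1) * (2 * (q : ℝ) + 3))) * ‖a - b‖ ^ 2 := by
  subst hw hτ
  have hsign : ((-1 : ℝ) ^ q / 2) ^ 2 = 1 / 4 := by
    rw [div_pow, ← pow_mul, mul_comm, pow_mul]
    norm_num
  simp only [norm_smul, mul_pow, Real.norm_eq_abs, sq_abs, hsign, legendreMapped]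
  rw [integral_mul_const, integral_const_mul,
    integral_comp_affine_neg_one_one
      (fun x ↦ ((legendreP q).eval x - (legendreP (q + 1)).eval x) ^ 2),
    integral_legendreP_sub_legendreP_succ_sq, smul_eq_mul]
  field_simp
  ring

theorem jump_estimator_explicit_form
    {H : Type*} [NormedAddCommGroup H] [InnerProductSpace ℝ H]
    (a b : H) (q : ℕ) (t₀ t₁ τ : ℝ) (ht : t₀ < t₁) (hτ : τ = t₁ - t₀)
    (w : ℝ → H)
    (hw : w = fun t =>
      (((-1 : ℝ) ^ q / 2) * (legendreMapped q t₀ t₁ t - legendreMapped (q + 1) t₀ t₁ t)) •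
        (a - b)) :
    (∫ t in t₀..t₁, ‖w t‖ ^ 2) =
      (τ * ((q : ℝ) + 1) / ((2 * (q : ℝ) + 1) * (2 * (q : ℝ) + 3))) * ‖a - b‖ ^ 2 :=
  jump_estimator_explicit_form_general a b q t₀ t₁ τ hτ w hw
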